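/- arXiv:2407.02130 — 2 statements merged into one kernel-verified Lean document; each statement's English description precedes it below -/
import Mathlib

section
/- Let M ⊆ ℂ^d be a domain (nonempty open connected set) and let p ∈ M be a point at which the infinitesimal Kobayashi metric vanishes in every direction, i.e., K_M(p;ξ) = 0 for every ξ ∈ ℂ^d. Then every bounded holomorphic function f : M → ℂ is constant. -/
open Metric Set MeasureTheory Filter
open scoped ENNReal NNReal Topology

noncomputable section

/-- `ℂ^d` with the Euclidean norm. -/
abbrev Cn (d : ℕ) := EuclideanSpace ℂ (Fin d)

/-- The infinitesimal Kobayashi metric of a set `S ⊆ ℂ^d` at a point `p` in the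
direction `ξ`:  the infimum of all `r > 0` such that there is a holomorphic map
`φ : Δ → S` with `φ 0 = p` and `φ' 0 = ξ / r`. -/
def kob {d : ℕ} (S : Set (Cn d)) (p ξ : Cn d) : ℝ :=
  sInf {r : ℝ | 0 < r ∧ ∃ φ : ℂ → Cn d,
    DifferentiableOn ℂ φ (ball 0 1) ∧ MapsTo φ (ball 0 1) S ∧
    φ 0 = p ∧ deriv φ 0 = r⁻¹ • ξ}

/-- A set `Ω ⊆ ℂ^d` has uniform squeezing constant `r > 0` if for every `p ∈ Ω` there
is an injective holomorphic map `f : Ω → B(0;1)` with `f p = 0` and `B(0;r) ⊆ f(Ω)`. -/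
def UnifSqueezing {d : ℕ} (Ω : Set (Cn d)) (r : ℝ) : Prop :=
  ∀ p ∈ Ω, ∃ f : Cn d → Cn d, DifferentiableOn ℂ f Ω ∧ InjOn f Ω ∧
    f p = 0 ∧ f '' Ω ⊆ ball 0 1 ∧ ball 0 r ⊆ f '' Ω

/-- Two sets `U, V ⊆ ℂ^d` are biholomorphic: there is a holomorphic bijection
`U → V` whose inverse is holomorphic. -/
def Biholo {d : ℕ} (U V : Set (Cn d)) : Prop :=
  ∃ f g : Cn d → Cn d, DifferentiableOn ℂ f U ∧ DifferentiableOn ℂ g V ∧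
    MapsTo f U V ∧ MapsTo g V U ∧ (∀ x ∈ U, g (f x) = x) ∧ (∀ y ∈ V, f (g y) = y)

/-!
Put `F = f - f p` and let `B` bound `‖F‖` on `M`. On a ball `B(p, ε) ⊆ M` we prove by induction
that `‖F q‖ ≤ B (‖q - p‖ / ε) ^ (n + 1)` for every `n`, so `F` vanishes near `p`; the identity
theorem along complex lines then spreads this over the connected set `M`.

The induction step is the higher-order Schwarz lemma on the complex line through `p` and `q`,
which needs `F (p + t ξ) = o(|t| ^ (n + 1))` in every direction `ξ`. Vanishing of the Kobayashi
metric supplies discs `φ` with `φ 0 = p`, `φ' 0 = ξ / r` and `r` arbitrarily small. By the Schwarz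
lemma `‖F (φ s)‖ ≤ B |s| ^ (n + 1)`, and the bound already proved makes `F` so flat at `p` that
`F ∘ φ` and `F` on the tangent line `s ↦ p + s φ' 0` differ by `o(|s| ^ (n + 1))`. Substituting
`s = r t` gives `‖F (p + t ξ)‖ ≤ (B + 1) r ^ (n + 1) |t| ^ (n + 1)` near `0`.
-/

open Asymptotics

namespace Kobayashi

section

variable {E V : Type*} [NormedAddCommGroup E] [NormedSpace ℂ E]
  [NormedAddCommGroup V] {F : E → V}

theorem isBigO_comp_of_norm_le_pow {p : E} {ε B : ℝ} {k : ℕ} (hε : 0 < ε)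
    (hk : ∀ q ∈ ball p ε, ‖F q‖ ≤ B * (‖q - p‖ / ε) ^ k) {ψ : ℂ → E} {η : E}
    (hψ : HasDerivAt ψ η 0) (hψ0 : ψ 0 = p) :
    (fun t => F (ψ t)) =O[𝓝 0] fun t => ‖t‖ ^ k := by
  have hmem : ∀ᶠ t in 𝓝 0, ψ t ∈ ball p ε :=
    hψ.continuousAt.eventually_mem (hψ0 ▸ ball_mem_nhds p hε)
  have hF : (fun t => F (ψ t)) =O[𝓝 0] fun t => ‖ψ t - p‖ ^ k := by
    refine .of_bound (B / ε ^ k) (hmem.mono fun t ht => ?_)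
    rw [norm_pow, norm_norm, div_mul_eq_mul_div, mul_div_assoc, ← div_pow]
    exact hk _ ht
  have hψO : (fun t => ψ t - p) =O[𝓝 0] fun t => t := by
    simpa [hψ0] using hψ.isBigO_sub
  simpa using hF.trans (hψO.norm_norm.pow k)

variable [NormedSpace ℂ V]

theorem norm_sub_le_of_norm_le_on_ball {x y : E} {s A : ℝ} (hF : DifferentiableOn ℂ F (ball x s))
    (hA : ∀ w ∈ ball x s, ‖F w‖ ≤ A) (hy : y ∈ ball x s) :
    ‖F y - F x‖ ≤ 2 * A / s * ‖y - x‖ := by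
  have hx : x ∈ ball x s := mem_ball_self (pos_of_mem_ball hy)
  have hmaps : MapsTo F (ball x s) (closedBall (F x) (2 * A)) := fun w hw => by
    rw [mem_closedBall, dist_eq_norm]
    linarith [norm_sub_le (F w) (F x), hA w hw, hA x hx]
  simpa [dist_eq_norm] using Complex.dist_le_div_mul_dist_of_mapsTo_ball hF hmaps hy

theorem add_smul_sub_mem_ball {p q : E} {ε : ℝ} {t : ℂ} (ht : t ∈ ball 0 (ε / ‖q - p‖)) :
    p + t • (q - p) ∈ ball p ε := by
  rcases eq_or_ne q p with rfl | hqp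
  · simp at ht
  rw [mem_ball_zero_iff, lt_div_iff₀ (norm_pos_iff.mpr (sub_ne_zero.mpr hqp))] at ht
  simpa [norm_smul] using ht

theorem norm_le_of_isLittleO_line {p q : E} {ε B : ℝ} {n : ℕ}
    (hF : DifferentiableOn ℂ F (ball p ε)) (hB : ∀ w ∈ ball p ε, ‖F w‖ ≤ B) (hFp : F p = 0)
    (hq : q ∈ ball p ε) (hline : (fun t : ℂ => F (p + t • (q - p))) =o[𝓝 0] fun t => ‖t‖ ^ n) :
    ‖F q‖ ≤ B * (‖q - p‖ / ε) ^ (n + 1) := by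
  rcases eq_or_ne q p with rfl | hqp
  · simp [hFp]
  set g : ℂ → V := fun t => F (p + t • (q - p))
  have hline_maps : MapsTo (fun t : ℂ => p + t • (q - p)) (ball 0 (ε / ‖q - p‖)) (ball p ε) :=
    fun _ => add_smul_sub_mem_ball
  have hg0 : g 0 = 0 := by simp [g, hFp]
  have hmaps : MapsTo g (ball 0 (ε / ‖q - p‖)) (closedBall (g 0) B) := fun t ht => by
    simpa [hg0] using hB _ (hline_maps ht)
  have h1 : (1 : ℂ) ∈ ball 0 (ε / ‖q - p‖) := by
    rw [mem_ball_zero_iff, norm_one, one_lt_div (norm_pos_iff.mpr (sub_ne_zero.mpr hqp))]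
    exact mem_ball_iff_norm.mp hq
  simpa [g, hFp] using Complex.dist_le_mul_div_pow_of_mapsTo_ball_of_isLittleO
    (hF.comp (by fun_prop) hline_maps) hmaps (by simpa [g, hFp] using hline) h1

theorem norm_comp_le_of_norm_le_pow {M : Set E} {p : E} {ε B : ℝ} {n : ℕ} (hε : 0 < ε)
    (hF : DifferentiableOn ℂ F M) (hB : ∀ w ∈ M, ‖F w‖ ≤ B) (hFp : F p = 0)
    (hk : ∀ q ∈ ball p ε, ‖F q‖ ≤ B * (‖q - p‖ / ε) ^ (n + 1)) {ψ : ℂ → E}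
    (hψ : DifferentiableOn ℂ ψ (ball 0 1)) (hψM : MapsTo ψ (ball 0 1) M) (hψ0 : ψ 0 = p)
    {t : ℂ} (ht : t ∈ ball 0 1) : ‖F (ψ t)‖ ≤ B * ‖t‖ ^ (n + 1) := by
  have hψ' : HasDerivAt ψ (deriv ψ 0) 0 :=
    (hψ.differentiableAt (ball_mem_nhds 0 one_pos)).hasDerivAt
  have hmaps : MapsTo (F ∘ ψ) (ball 0 1) (closedBall (F (ψ 0)) B) := fun s hs => by
    simpa [hψ0, hFp] using hB _ (hψM hs)
  have ho : (fun s => F (ψ s) - F (ψ 0)) =o[𝓝 0] fun s => ‖s - 0‖ ^ n := by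
    simpa [hψ0, hFp] using (isBigO_comp_of_norm_le_pow hε hk hψ' hψ0).trans_isLittleO
      (isLittleO_norm_pow_norm_pow (Nat.lt_succ_self n))
  simpa [hψ0, hFp] using Complex.dist_le_mul_div_pow_of_mapsTo_ball_of_isLittleO
    (hF.comp hψ hψM) hmaps ho ht

theorem isLittleO_comp_sub_line {p : E} {ε B : ℝ} {n : ℕ} (hε : 0 < ε)
    (hB : 0 ≤ B) (hF : DifferentiableOn ℂ F (ball p ε))
    (hk : ∀ q ∈ ball p ε, ‖F q‖ ≤ B * (‖q - p‖ / ε) ^ (n + 1)) {ψ : ℂ → E} {η : E}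
    (hψ : HasDerivAt ψ η 0) (hψ0 : ψ 0 = p) :
    (fun t => F (ψ t) - F (p + t • η)) =o[𝓝 0] fun t => ‖t‖ ^ (n + 1) := by
  set K := ‖η‖ + 1
  have hrem : (fun t => ψ t - (p + t • η)) =o[𝓝 0] fun t => t := by
    simpa [hψ0, sub_sub] using hasDerivAt_iff_isLittleO.mp hψ
  have hsmall : ∀ᶠ t in 𝓝 (0 : ℂ), K * ‖t‖ < ε := by
    have : Continuous fun t : ℂ => K * ‖t‖ := by fun_prop
    exact this.continuousAt.eventually_lt continuousAt_const (by simpa using hε)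
  have hlip : ∀ᶠ t in 𝓝 0, ‖F (ψ t) - F (p + t • η)‖ ≤
      2 * B * (K / ε) ^ (n + 1) * (‖t‖ ^ n * ‖ψ t - (p + t • η)‖) := by
    filter_upwards [hrem.bound one_half_pos, hsmall] with t hnear hKt
    rcases eq_or_ne t 0 with rfl | ht0
    · simp [hψ0]
    have htpos : 0 < ‖t‖ := norm_pos_iff.mpr ht0
    have hsub : ball (p + t • η) ‖t‖ ⊆ ball p (K * ‖t‖) := by
      refine ball_subset_ball' ?_
      rw [dist_eq_norm, add_sub_cancel_left, norm_smul]
      linarith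
    have hA : ∀ w ∈ ball (p + t • η) ‖t‖, ‖F w‖ ≤ B * (K * ‖t‖ / ε) ^ (n + 1) := by
      intro w hw
      calc ‖F w‖ ≤ B * (‖w - p‖ / ε) ^ (n + 1) :=
            hk w (ball_subset_ball hKt.le (hsub hw))
        _ ≤ B * (K * ‖t‖ / ε) ^ (n + 1) := by
            gcongr
            exact (mem_ball_iff_norm.mp (hsub hw)).le
    have hψt : ψ t ∈ ball (p + t • η) ‖t‖ := by
      rw [mem_ball_iff_norm]
      linarith
    refine (norm_sub_le_of_norm_le_on_ball
      (hF.mono (hsub.trans (ball_subset_ball hKt.le))) hA hψt).trans_eq ?_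
    rw [div_pow, div_pow, mul_pow, pow_succ ‖t‖]
    field_simp
  have hbig : (fun t => F (ψ t) - F (p + t • η)) =O[𝓝 0]
      fun t => ‖t‖ ^ n * ‖ψ t - (p + t • η)‖ :=
    .of_bound _ (hlip.mono fun t ht => ht.trans_eq (by rw [Real.norm_of_nonneg (by positivity)]))
  simpa [pow_succ, mul_assoc] using hbig.trans_isLittleO
    ((isBigO_refl (fun t : ℂ => ‖t‖ ^ n) _).mul_isLittleO hrem.norm_norm)

theorem convex_preimage_line {U : Set E} (hU : Convex ℝ U) (y v : E) :
    Convex ℝ ((fun t : ℂ => y + t • v) ⁻¹' U) :=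
  (hU.translate_preimage_right y).is_linear_preimage
    ⟨fun _ _ => add_smul .., fun _ _ => smul_assoc ..⟩

theorem eqOn_zero_of_convex [CompleteSpace V] {U : Set E} (hUo : IsOpen U) (hUc : Convex ℝ U)
    (hF : DifferentiableOn ℂ F U) {y : E} (hy : y ∈ U) (h0 : F =ᶠ[𝓝 y] 0) : EqOn F 0 U := by
  intro q hq
  set L : ℂ → E := fun t => y + t • (q - y)
  have hL : Continuous L := by fun_prop
  have hg : AnalyticOnNhd ℂ (F ∘ L) (L ⁻¹' U) :=
    (hF.comp (f := L) (by fun_prop) fun _ ht => ht).analyticOnNhd (hUo.preimage hL)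
  have h00 : F ∘ L =ᶠ[𝓝 0] 0 :=
    (hL.tendsto 0).eventually (p := fun x => F x = 0) (by simpa [L, EventuallyEq] using h0)
  simpa [L] using hg.eqOn_zero_of_preconnected_of_eventuallyEq_zero
    (convex_preimage_line hUc y (q - y)).isPreconnected (by simpa [L]) h00
    (show (1 : ℂ) ∈ L ⁻¹' U by simpa [L])

theorem eqOn_zero_of_isPreconnected [CompleteSpace V] {U : Set E} (hUo : IsOpen U)
    (hUc : IsPreconnected U) (hF : DifferentiableOn ℂ F U) {p : E} (hp : p ∈ U)
    (h0 : F =ᶠ[𝓝 p] 0) : EqOn F 0 U := by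
  have hS : U ⊆ {x | F =ᶠ[𝓝 x] 0} := by
    refine hUc.subset_of_closure_inter_subset isOpen_setOfPred_eventually_nhds ⟨p, hp, h0⟩ ?_
    rintro x ⟨hx, hxU⟩
    obtain ⟨r, hr, hrU⟩ := Metric.isOpen_iff.mp hUo x hxU
    obtain ⟨y, hyS, hxy⟩ := Metric.mem_closure_iff.mp hx r hr
    exact eventually_of_mem (ball_mem_nhds x hr) <|
      eqOn_zero_of_convex isOpen_ball (convex_ball x r) (hF.mono hrU) (mem_ball'.mpr hxy) hyS
  exact fun x hx => (hS hx).self_of_nhds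

end

section

variable {d : ℕ} {V : Type*} [NormedAddCommGroup V] [NormedSpace ℂ V]
  {M : Set (Cn d)} {p ξ : Cn d}

theorem exists_lt_of_kob_eq_zero (hM : IsOpen M) (hp : p ∈ M) (h : kob M p ξ = 0) {c : ℝ}
    (hc : 0 < c) : ∃ r < c, 0 < r ∧ ∃ φ : ℂ → Cn d, DifferentiableOn ℂ φ (ball 0 1) ∧
      MapsTo φ (ball 0 1) M ∧ φ 0 = p ∧ deriv φ 0 = r⁻¹ • ξ := by
  obtain ⟨ε, hε, hεM⟩ := Metric.isOpen_iff.mp hM p hp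
  set r := (‖ξ‖ + 1) / ε
  have hr : 0 < r := by positivity
  have hline : MapsTo (fun t : ℂ => p + t • (r⁻¹ • ξ)) (ball 0 1) M := fun t ht => by
    refine hεM (mem_ball_iff_norm.mpr ?_)
    rw [mem_ball_zero_iff] at ht
    rw [add_sub_cancel_left, norm_smul, norm_smul, Real.norm_of_nonneg (inv_pos.mpr hr).le]
    calc ‖t‖ * (r⁻¹ * ‖ξ‖) ≤ r⁻¹ * ‖ξ‖ := mul_le_of_le_one_left (by positivity) ht.le
      _ < ε := by
        rw [inv_div, div_mul_eq_mul_div, div_lt_iff₀ (by positivity)]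
        nlinarith [norm_nonneg ξ]
  -- Without a disc, `kob M p ξ = 0` would only be the junk value `sInf ∅ = 0`.
  have hne : {r : ℝ | 0 < r ∧ ∃ φ : ℂ → Cn d, DifferentiableOn ℂ φ (ball 0 1) ∧
      MapsTo φ (ball 0 1) M ∧ φ 0 = p ∧ deriv φ 0 = r⁻¹ • ξ}.Nonempty :=
    ⟨r, hr, _, by fun_prop, hline, by simp,
      ((hasDerivAt_id (0 : ℂ)).smul_const _ |>.const_add p).deriv.trans (one_smul ..)⟩
  obtain ⟨r, hr, hrc⟩ := (csInf_lt_iff ⟨0, fun r hr => hr.1.le⟩ hne).mp (h ▸ hc)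
  exact ⟨r, hrc, hr⟩

theorem isLittleO_line_of_kob_eq_zero {F : Cn d → V} {ε B : ℝ} {n : ℕ} (hε : 0 < ε)
    (hεM : ball p ε ⊆ M) (hM : IsOpen M) (hF : DifferentiableOn ℂ F M)
    (hB : ∀ w ∈ M, ‖F w‖ ≤ B) (hFp : F p = 0)
    (hk : ∀ q ∈ ball p ε, ‖F q‖ ≤ B * (‖q - p‖ / ε) ^ (n + 1)) (hvan : kob M p ξ = 0) :
    (fun t : ℂ => F (p + t • ξ)) =o[𝓝 0] fun t => ‖t‖ ^ (n + 1) := by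
  have hp : p ∈ M := hεM (mem_ball_self hε)
  have hB0 : 0 ≤ B := (norm_nonneg _).trans (hB p hp)
  rw [isLittleO_iff]
  intro c hc
  obtain ⟨r, hrc, hr, φ, hφ, hφM, hφ0, hφ'⟩ :=
    exists_lt_of_kob_eq_zero hM hp hvan (lt_min one_pos (div_pos hc (by linarith : 0 < B + 1)))
  have hφd : HasDerivAt φ (deriv φ 0) 0 :=
    (hφ.differentiableAt (ball_mem_nhds 0 one_pos)).hasDerivAt
  have htangent : ∀ᶠ s in 𝓝 (0 : ℂ), ‖F (p + s • deriv φ 0)‖ ≤ (B + 1) * ‖s‖ ^ (n + 1) := by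
    filter_upwards [(isLittleO_comp_sub_line hε hB0 (hF.mono hεM) hk hφd hφ0).bound one_pos,
      ball_mem_nhds (0 : ℂ) one_pos] with s hs hs1
    have hdisc := norm_comp_le_of_norm_le_pow hε hF hB hFp hk hφ hφM hφ0 hs1
    rw [norm_pow, norm_norm] at hs
    linarith [norm_le_norm_add_norm_sub' (F (p + s • deriv φ 0)) (F (φ s)),
      norm_sub_rev (F (φ s)) (F (p + s • deriv φ 0))]
  have hscale : Tendsto (fun t : ℂ => (r : ℂ) * t) (𝓝 0) (𝓝 0) := by
    simpa using (continuous_const_mul (r : ℂ)).tendsto 0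
  filter_upwards [hscale.eventually htangent] with t ht
  have hline : p + ((r : ℂ) * t) • deriv φ 0 = p + t • ξ := by
    rw [hφ', mul_comm, mul_smul, Complex.coe_smul, smul_inv_smul₀ hr.ne']
  rw [hline, norm_mul, Complex.norm_real, Real.norm_of_nonneg hr.le, mul_pow] at ht
  have hr1 : r ^ (n + 1) ≤ r := pow_le_of_le_one hr.le (hrc.trans_le (min_le_left _ _)).le
    n.succ_ne_zero
  have hrB : (B + 1) * r ≤ c := by
    have := hrc.trans_le (min_le_right _ _)
    rw [lt_div_iff₀ (by linarith)] at this
    linarith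
  rw [norm_pow, norm_norm]
  calc ‖F (p + t • ξ)‖ ≤ (B + 1) * (r ^ (n + 1) * ‖t‖ ^ (n + 1)) := ht
    _ ≤ (B + 1) * r * ‖t‖ ^ (n + 1) := by rw [← mul_assoc]; gcongr
    _ ≤ c * ‖t‖ ^ (n + 1) := by gcongr

theorem eventuallyEq_zero_of_kob_eq_zero {F : Cn d → V} {B : ℝ} (hM : IsOpen M) (hp : p ∈ M)
    (hF : DifferentiableOn ℂ F M) (hB : ∀ w ∈ M, ‖F w‖ ≤ B) (hFp : F p = 0)
    (hvan : ∀ ξ, kob M p ξ = 0) : F =ᶠ[𝓝 p] 0 := by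
  obtain ⟨ε, hε, hεM⟩ := Metric.isOpen_iff.mp hM p hp
  have hFε : DifferentiableOn ℂ F (ball p ε) := hF.mono hεM
  have hBε : ∀ w ∈ ball p ε, ‖F w‖ ≤ B := fun w hw => hB w (hεM hw)
  have hcont : ∀ q : Cn d, (fun t : ℂ => F (p + t • (q - p))) =o[𝓝 0] fun t => ‖t‖ ^ 0 := by
    intro q
    simp only [pow_zero, isLittleO_one_iff]
    have hline : Tendsto (fun t : ℂ => p + t • (q - p)) (𝓝 0) (𝓝 p) := by
      simpa using ((continuous_id.smul continuous_const).const_add p).tendsto (0 : ℂ)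
    simpa [hFp, Function.comp_def] using
      (hFε.differentiableAt (ball_mem_nhds p hε)).continuousAt.tendsto.comp hline
  have hpow : ∀ n : ℕ, ∀ q ∈ ball p ε, ‖F q‖ ≤ B * (‖q - p‖ / ε) ^ (n + 1) := by
    intro n
    induction n with
    | zero => exact fun q hq => norm_le_of_isLittleO_line hFε hBε hFp hq (hcont q)
    | succ n ih =>
      exact fun q hq => norm_le_of_isLittleO_line hFε hBε hFp hq
        (isLittleO_line_of_kob_eq_zero hε hεM hM hF hB hFp ih (hvan _))
  filter_upwards [ball_mem_nhds p hε] with q hq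
  have hlt : ‖q - p‖ / ε < 1 := (div_lt_one hε).mpr (mem_ball_iff_norm.mp hq)
  have hlim : Tendsto (fun n : ℕ => B * (‖q - p‖ / ε) ^ (n + 1)) atTop (𝓝 0) := by
    simpa using ((tendsto_pow_atTop_nhds_zero_of_lt_one (by positivity) hlt).comp
      (tendsto_add_atTop_nat 1)).const_mul B
  exact norm_le_zero_iff.mp (ge_of_tendsto' hlim fun n => hpow n q hq)

end

end Kobayashi

theorem stmt_3_general (d : ℕ)
    (M : Set (Cn d)) (hMopen : IsOpen M) (hMconn : IsConnected M)
    (p : Cn d) (hp : p ∈ M) (hvan : ∀ ξ : Cn d, kob M p ξ = 0)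
    (f : Cn d → ℂ) (hf : DifferentiableOn ℂ f M)
    (hbdd : ∃ C : ℝ, ∀ z ∈ M, ‖f z‖ ≤ C) :
    ∃ c : ℂ, ∀ z ∈ M, f z = c := by
  obtain ⟨C, hC⟩ := hbdd
  have hF : DifferentiableOn ℂ (fun z => f z - f p) M := hf.sub_const (f p)
  have hFB : ∀ z ∈ M, ‖f z - f p‖ ≤ C + ‖f p‖ := fun z hz =>
    (norm_sub_le _ _).trans (by linarith [hC z hz])
  have hloc := Kobayashi.eventuallyEq_zero_of_kob_eq_zero hMopen hp hF hFB (sub_self _) hvan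
  exact ⟨f p, fun z hz => sub_eq_zero.mp <|
    Kobayashi.eqOn_zero_of_isPreconnected hMopen hMconn.isPreconnected hF hp hloc hz⟩

/-- If the Kobayashi metric of a domain `M ⊆ ℂ^d` vanishes in every direction at some
point `p ∈ M`, then every bounded holomorphic function on `M` is constant. -/
theorem stmt_3 (d : ℕ) (hd : 1 ≤ d)
    (M : Set (Cn d)) (hMopen : IsOpen M) (hMconn : IsConnected M)
    (p : Cn d) (hp : p ∈ M) (hvan : ∀ ξ : Cn d, kob M p ξ = 0)
    (f : Cn d → ℂ) (hf : DifferentiableOn ℂ f M)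
    (hbdd : ∃ C : ℝ, ∀ z ∈ M, ‖f z‖ ≤ C) :
    ∃ c : ℂ, ∀ z ∈ M, f z = c :=
  stmt_3_general d M hMopen hMconn p hp hvan f hf hbdd
end
end

section
/- Let S_n ⊆ ℂ^d be open sets with S_n ⊆ S_{n+1} for all n ≥ 1 and let S = ⋃_{n≥1} S_n. Then for every p ∈ S and ξ ∈ ℂ^d, the sequence n ↦ K_{S_n}(p;ξ) (defined for all n with p ∈ S_n) is nonincreasing and converges to K_S(p;ξ); equivalently, K_S(p;ξ) = inf_n K_{S_n}(p;ξ). -/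
open Metric Set MeasureTheory Filter
open scoped ENNReal NNReal Topology

noncomputable section

/-!
The Kobayashi metric decreases as the domain grows, so only `K_S ≥ inf_n K_{S_n}` needs an
argument. Given a competitor disc `φ : Δ → S` for `K_S(p;ξ)` with constant `r` and `t < 1`, the
image of the closed disc of radius `t` under `φ` is compact, so it lies in some `S_n`; the
rescaled disc `z ↦ φ (t z)` is then a competitor for `K_{S_n}(p;ξ)` with constant `r / t`.
-/

/-- `kob S p ξ` is definitionally `sInf (kobSet S p ξ)`. -/
def kobSet {d : ℕ} (S : Set (Cn d)) (p ξ : Cn d) : Set ℝ :=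
  {r : ℝ | 0 < r ∧ ∃ φ : ℂ → Cn d,
    DifferentiableOn ℂ φ (ball 0 1) ∧ MapsTo φ (ball 0 1) S ∧
    φ 0 = p ∧ deriv φ 0 = r⁻¹ • ξ}

section Kobayashi

variable {d : ℕ} {S T : Set (Cn d)} {p ξ : Cn d}

lemma kobSet_bddBelow (S : Set (Cn d)) (p ξ : Cn d) : BddBelow (kobSet S p ξ) :=
  ⟨0, fun _ hr => hr.1.le⟩

lemma kob_nonneg (S : Set (Cn d)) (p ξ : Cn d) : 0 ≤ kob S p ξ :=
  Real.sInf_nonneg fun _ hr => hr.1.le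

lemma kob_le_of_mem_kobSet {r : ℝ} (hr : r ∈ kobSet S p ξ) : kob S p ξ ≤ r :=
  csInf_le (kobSet_bddBelow S p ξ) hr

lemma mem_of_mem_kobSet {r : ℝ} (hr : r ∈ kobSet S p ξ) : p ∈ S := by
  obtain ⟨-, φ, -, hφS, hφ0, -⟩ := hr
  exact hφ0 ▸ hφS (mem_ball_self one_pos)

lemma kobSet_mono (h : S ⊆ T) (p ξ : Cn d) : kobSet S p ξ ⊆ kobSet T p ξ :=
  fun _ ⟨hr, φ, hφd, hφS, hφ0, hφ'⟩ => ⟨hr, φ, hφd, hφS.mono_right h, hφ0, hφ'⟩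

/-- A small affine disc through `p` in the direction `ξ` is a competitor. -/
lemma kobSet_nonempty (hS : IsOpen S) (hp : p ∈ S) (ξ : Cn d) : (kobSet S p ξ).Nonempty := by
  obtain ⟨δ, hδ, hball⟩ := Metric.isOpen_iff.1 hS p hp
  set ε : ℝ := δ / (‖ξ‖ + 1)
  have hε : 0 < ε := by positivity
  have hεξ : ε * ‖ξ‖ < δ := by
    rw [div_mul_eq_mul_div, div_lt_iff₀ (by positivity)]
    nlinarith
  have hder (z : ℂ) : HasDerivAt (fun w : ℂ => p + w • (ε • ξ)) (ε • ξ) z := by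
    simpa using ((hasDerivAt_id z).smul_const (ε • ξ)).const_add p
  refine ⟨ε⁻¹, inv_pos.2 hε, fun z => p + z • (ε • ξ),
    fun z _ => (hder z).differentiableAt.differentiableWithinAt, fun z hz => hball ?_,
    by simp, by rw [(hder 0).deriv, inv_inv]⟩
  rw [mem_ball_zero_iff] at hz
  rw [mem_ball, dist_eq_norm, add_sub_cancel_left, norm_smul, norm_smul,
    Real.norm_of_nonneg hε.le]
  calc ‖z‖ * (ε * ‖ξ‖) ≤ 1 * (ε * ‖ξ‖) := by gcongr
    _ < δ := by rwa [one_mul]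

lemma kob_anti (h : S ⊆ T) (hS : IsOpen S) (hp : p ∈ S) (ξ : Cn d) :
    kob T p ξ ≤ kob S p ξ :=
  csInf_le_csInf (kobSet_bddBelow T p ξ) (kobSet_nonempty hS hp ξ) (kobSet_mono h p ξ)

lemma exists_isCompact_div_mem_kobSet {r t : ℝ} (hr : r ∈ kobSet S p ξ) (ht0 : 0 < t)
    (ht1 : t < 1) : ∃ K ⊆ S, IsCompact K ∧ ∀ U, K ⊆ U → r / t ∈ kobSet U p ξ := by
  obtain ⟨hrpos, φ, hφd, hφS, hφ0, hφ'⟩ := hr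
  have hsub : closedBall (0 : ℂ) t ⊆ ball 0 1 := closedBall_subset_ball ht1
  have hscale : MapsTo (fun z : ℂ => (t : ℂ) * z) (ball 0 1) (closedBall 0 t) := by
    intro z hz
    rw [mem_ball_zero_iff] at hz
    rw [mem_closedBall_zero_iff, norm_mul, Complex.norm_real, Real.norm_of_nonneg ht0.le]
    exact mul_le_of_le_one_right ht0.le hz.le
  have hφ : HasDerivAt φ (r⁻¹ • ξ) 0 :=
    hφ' ▸ (hφd.differentiableAt (ball_mem_nhds 0 one_pos)).hasDerivAt
  have hφt : HasDerivAt (fun z => φ ((t : ℂ) * z)) ((t : ℂ) • r⁻¹ • ξ) 0 :=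
    HasDerivAt.scomp (0 : ℂ) (by simpa using hφ) (by simpa using (hasDerivAt_id (0 : ℂ)).const_mul (t : ℂ))
  refine ⟨φ '' closedBall 0 t, (hφS.mono_left hsub).image_subset,
    (isCompact_closedBall 0 t).image_of_continuousOn (hφd.continuousOn.mono hsub),
    fun U hKU => ⟨div_pos hrpos ht0, fun z => φ ((t : ℂ) * z), ?_, ?_, by simp [hφ0], ?_⟩⟩
  · exact hφd.comp (differentiable_id.const_mul _).differentiableOn (hscale.mono_right hsub)
  · exact fun z hz => hKU (mem_image_of_mem φ (hscale hz))
  · rw [hφt.deriv, Complex.coe_smul, smul_smul, inv_div, div_eq_mul_inv]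

lemma exists_div_mem_kobSet_of_mem_kobSet_iUnion {ι : Type*} {S : ι → Set (Cn d)}
    (hSopen : ∀ i, IsOpen (S i)) (hdir : Directed (· ⊆ ·) S) {r t : ℝ}
    (hr : r ∈ kobSet (⋃ i, S i) p ξ) (ht0 : 0 < t) (ht1 : t < 1) :
    ∃ i, r / t ∈ kobSet (S i) p ξ := by
  have : Nonempty ι := (mem_iUnion.1 (mem_of_mem_kobSet hr)).nonempty
  obtain ⟨K, hKS, hK, hKmem⟩ := exists_isCompact_div_mem_kobSet hr ht0 ht1
  obtain ⟨i, hKi⟩ := hK.elim_directed_cover S hSopen hKS hdir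
  exact ⟨i, hKmem (S i) hKi⟩

lemma exists_kob_lt_of_kob_iUnion_lt {ι : Type*} {S : ι → Set (Cn d)}
    (hSopen : ∀ i, IsOpen (S i)) (hdir : Directed (· ⊆ ·) S) (hp : p ∈ ⋃ i, S i) {a : ℝ}
    (ha : kob (⋃ i, S i) p ξ < a) : ∃ i, p ∈ S i ∧ kob (S i) p ξ < a := by
  obtain ⟨r, hr, hra⟩ :=
    exists_lt_of_csInf_lt (kobSet_nonempty (isOpen_iUnion hSopen) hp ξ) ha
  have ha0 : 0 < a := hr.1.trans hra
  obtain ⟨t, hrt, ht1⟩ := exists_between ((div_lt_one ha0).2 hra)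
  have ht0 : 0 < t := (div_pos hr.1 ha0).trans hrt
  obtain ⟨i, hi⟩ := exists_div_mem_kobSet_of_mem_kobSet_iUnion hSopen hdir hr ht0 ht1
  refine ⟨i, mem_of_mem_kobSet hi, (kob_le_of_mem_kobSet hi).trans_lt ?_⟩
  rwa [div_lt_iff₀ ht0, mul_comm, ← div_lt_iff₀ ha0]

lemma kob_iUnion_eq_sInf {ι : Type*} {S : ι → Set (Cn d)} (hSopen : ∀ i, IsOpen (S i))
    (hdir : Directed (· ⊆ ·) S) (hp : p ∈ ⋃ i, S i) :
    kob (⋃ i, S i) p ξ = sInf {x : ℝ | ∃ i, p ∈ S i ∧ x = kob (S i) p ξ} := by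
  obtain ⟨i₀, hi₀⟩ := mem_iUnion.1 hp
  refine le_antisymm ?_ (le_of_forall_gt_imp_ge_of_dense fun a ha => ?_)
  · refine le_csInf ⟨_, i₀, hi₀, rfl⟩ ?_
    rintro _ ⟨i, hi, rfl⟩
    exact kob_anti (subset_iUnion S i) (hSopen i) hi ξ
  · obtain ⟨i, hi, hia⟩ := exists_kob_lt_of_kob_iUnion_lt hSopen hdir hp ha
    have hbdd : BddBelow {x : ℝ | ∃ i, p ∈ S i ∧ x = kob (S i) p ξ} := by
      refine ⟨0, ?_⟩
      rintro _ ⟨j, -, rfl⟩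
      exact kob_nonneg _ _ _
    exact (csInf_le hbdd ⟨i, hi, rfl⟩).trans hia.le

lemma tendsto_kob_iUnion {ι : Type*} [Preorder ι] [IsDirectedOrder ι] {S : ι → Set (Cn d)}
    (hSopen : ∀ i, IsOpen (S i)) (hS : Monotone S) (hp : p ∈ ⋃ i, S i) :
    Tendsto (fun i => kob (S i) p ξ) atTop (𝓝 (kob (⋃ i, S i) p ξ)) := by
  obtain ⟨i₀, hi₀⟩ := mem_iUnion.1 hp
  refine tendsto_order.2 ⟨fun a ha => ?_, fun a ha => ?_⟩
  · filter_upwards [eventually_ge_atTop i₀] with i hi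
    exact ha.trans_le (kob_anti (subset_iUnion S i) (hSopen i) (hS hi hi₀) ξ)
  · obtain ⟨j, hj, hja⟩ := exists_kob_lt_of_kob_iUnion_lt hSopen hS.directed_le hp ha
    filter_upwards [eventually_ge_atTop j] with i hi
    exact (kob_anti (hS hi) (hSopen j) hj ξ).trans_lt hja

end Kobayashi

theorem stmt_16_general (d : ℕ)
    (S : ℕ → Set (Cn d)) (hSopen : ∀ n, IsOpen (S n))
    (hmono : ∀ n, S n ⊆ S (n + 1))
    (Stot : Set (Cn d)) (hStot : Stot = ⋃ n, S n)
    (p ξ : Cn d) (hp : p ∈ Stot) :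
    (∀ n, p ∈ S n → kob (S (n + 1)) p ξ ≤ kob (S n) p ξ) ∧
    Tendsto (fun n => kob (S n) p ξ) atTop (𝓝 (kob Stot p ξ)) ∧
    kob Stot p ξ = sInf {x : ℝ | ∃ n, p ∈ S n ∧ x = kob (S n) p ξ} := by
  subst hStot
  have hS : Monotone S := monotone_nat_of_le_succ hmono
  exact ⟨fun n hn => kob_anti (hmono n) (hSopen n) hn ξ, tendsto_kob_iUnion hSopen hS hp,
    kob_iUnion_eq_sInf hSopen hS.directed_le hp⟩

/-- For an increasing sequence of open sets `Sₙ` with union `S`, the Kobayashi metric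
at `p` in direction `ξ` is nonincreasing in `n` and converges to the Kobayashi metric
of `S`; equivalently `K_S(p;ξ) = inf_n K_{Sₙ}(p;ξ)`. -/
theorem stmt_16 (d : ℕ) (hd : 1 ≤ d)
    (S : ℕ → Set (Cn d)) (hSopen : ∀ n, IsOpen (S n))
    (hmono : ∀ n, S n ⊆ S (n + 1))
    (Stot : Set (Cn d)) (hStot : Stot = ⋃ n, S n)
    (p ξ : Cn d) (hp : p ∈ Stot) :
    (∀ n, p ∈ S n → kob (S (n + 1)) p ξ ≤ kob (S n) p ξ) ∧
    Tendsto (fun n => kob (S n) p ξ) atTop (𝓝 (kob Stot p ξ)) ∧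
    kob Stot p ξ = sInf {x : ℝ | ∃ n, p ∈ S n ∧ x = kob (S n) p ξ} :=
  stmt_16_general d S hSopen hmono Stot hStot p ξ hp
end
end
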